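/- Let (G_α)_{α∈addr(t)} be a concrete evaluation of a tree t into a graph G under union and extension operations satisfying (R1) and (R2). Then for every address α, the node set V_α of G_α is contained in the set of nodes reachable in G from its port sequence port_α (Claim 2 of the Reachability Lemma). -/

import Mathlib

structure LabGraph (ν Ld Lb : Type) where
  V : Set ν
  E : Set (ν × Lb × ν)
  lab : ν → Ld
  port : List ν

def LabGraph.IsEmptyGraph {ν Ld Lb : Type} (G : LabGraph ν Ld Lb) : Prop :=
  G.V = ∅ ∧ G.E = ∅ ∧ G.port = []

def CloneWitness {ν Ld Lb : Type} (G : LabGraph ν Ld Lb) (C : Set ν) (Cv : ν → Set ν)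
    (G' : LabGraph ν Ld Lb) : Prop :=
  (∀ v, v ∈ G.V → v ∉ C → Cv v = {v}) ∧
  (∀ u v, u ∈ G.V → v ∈ G.V → u ≠ v → Disjoint (Cv u) (Cv v)) ∧
  G'.V = (⋃ v ∈ G.V, Cv v) ∧
  G'.E = {e | ∃ u ℓ w, (u, ℓ, w) ∈ G.E ∧ e.1 ∈ Cv u ∧ e.2.1 = ℓ ∧ e.2.2 ∈ Cv w} ∧
  (∀ v, v ∈ G.V → ∀ v' ∈ Cv v, G'.lab v' = G.lab v) ∧
  G'.port = G.port

def Clone {ν Ld Lb : Type} (G : LabGraph ν Ld Lb) (C : Set ν) : Set (LabGraph ν Ld Lb) :=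
  {G' | ∃ Cv, CloneWitness G C Cv G'}

structure ExpOp (ν Ld Lb : Type) where
  V : Set ν
  E : Set (ν × Lb × ν)
  lab : ν → Ld
  port : List ν
  dock : List ν
  C : Set ν
  E_sub : ∀ e ∈ E, e.1 ∈ V ∧ e.2.2 ∈ V
  port_nodup : port.Nodup
  dock_nodup : dock.Nodup
  port_sub : ∀ v ∈ port, v ∈ V
  dock_sub : ∀ v ∈ dock, v ∈ V
  C_sub : C ⊆ V \ ({v | v ∈ port} ∪ {v | v ∈ dock})

namespace ExpOp
variable {ν Ld Lb : Type}

def und (Φ : ExpOp ν Ld Lb) : LabGraph ν Ld Lb := ⟨Φ.V, Φ.E, Φ.lab, Φ.port⟩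

def NEW (Φ : ExpOp ν Ld Lb) : Set ν := {v | v ∈ Φ.port} \ {v | v ∈ Φ.dock}

def CONT (Φ : ExpOp ν Ld Lb) : Set ν := Φ.V \ ({v | v ∈ Φ.port} ∪ {v | v ∈ Φ.dock})

/-- (R1): every edge source lies in NEW. -/
def R1 (Φ : ExpOp ν Ld Lb) : Prop := ∀ e ∈ Φ.E, e.1 ∈ Φ.NEW

/-- (R2): every dock node that is not a port is the target of some edge. -/
def R2 (Φ : ExpOp ν Ld Lb) : Prop := ∀ v ∈ Φ.dock, v ∉ Φ.port → ∃ e ∈ Φ.E, e.2.2 = v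

/-- (R3): no isolated context nodes. -/
def R3 (Φ : ExpOp ν Ld Lb) : Prop := ∀ v ∈ Φ.V, v ∉ Φ.port → ∃ e ∈ Φ.E, e.2.2 = v

end ExpOp

def Apply {ν Ld Lb : Type} (Φ : ExpOp ν Ld Lb) (G H : LabGraph ν Ld Lb) : Prop :=
  G.port.length = Φ.dock.length ∧
  ∃ (Cv : ν → Set ν) (G'' : LabGraph ν Ld Lb) (μ : ν → ν),
    CloneWitness Φ.und Φ.C Cv G'' ∧
    Set.InjOn μ G''.V ∧
    (∀ v ∈ Φ.NEW, μ v ∉ G.V) ∧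
    Φ.dock.map μ = G.port ∧
    (∀ v ∈ Φ.CONT, ∀ v' ∈ Cv v, μ v' ∈ G.V ∧ μ v' ∉ {x | x ∈ G.port} ∧
      G.lab (μ v') = Φ.lab v) ∧
    H.V = G.V ∪ μ '' G''.V ∧
    H.E = G.E ∪ {e | ∃ e' ∈ G''.E, e = (μ e'.1, e'.2.1, μ e'.2.2)} ∧
    (∀ v ∈ G.V, H.lab v = G.lab v) ∧
    (∀ v' ∈ G''.V, μ v' ∉ G.V → H.lab (μ v') = G''.lab v') ∧
    H.port = G''.port.map μ

def UnionOf {ν Ld Lb : Type} (G₁ G₂ H : LabGraph ν Ld Lb) : Prop :=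
  Disjoint G₁.V G₂.V ∧
  H.V = G₁.V ∪ G₂.V ∧
  H.E = G₁.E ∪ G₂.E ∧
  (∀ v ∈ G₁.V, H.lab v = G₁.lab v) ∧
  (∀ v ∈ G₂.V, H.lab v = G₂.lab v) ∧
  H.port = G₁.port ++ G₂.port

def Subgraph {ν Ld Lb : Type} (G' G : LabGraph ν Ld Lb) : Prop :=
  G'.V ⊆ G.V ∧ G'.E ⊆ G.E ∧ (∀ v ∈ G'.V, G'.lab v = G.lab v)

def LabGraph.step {ν Ld Lb : Type} (G : LabGraph ν Ld Lb) (u v : ν) : Prop :=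
  ∃ ℓ, (u, ℓ, v) ∈ G.E

/-- Nodes reachable in `G` by directed paths from the nodes occurring in `p`. -/
def LabGraph.reachSet {ν Ld Lb : Type} (G : LabGraph ν Ld Lb) (p : List ν) : Set ν :=
  {v | ∃ u ∈ p, Relation.ReflTransGen G.step u v}

/-- `G↓p`: the subgraph of `G` induced by the nodes reachable from `p`, with port sequence `p`. -/
def LabGraph.restrictReach {ν Ld Lb : Type} (G : LabGraph ν Ld Lb) (p : List ν) : LabGraph ν Ld Lb :=
  ⟨G.reachSet p, {e | e ∈ G.E ∧ e.1 ∈ G.reachSet p ∧ e.2.2 ∈ G.reachSet p}, G.lab, p⟩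

inductive OpTree (ν Ld Lb : Type) : Type where
  | phi : OpTree ν Ld Lb
  | ext : ExpOp ν Ld Lb → OpTree ν Ld Lb → OpTree ν Ld Lb
  | union : OpTree ν Ld Lb → OpTree ν Ld Lb → OpTree ν Ld Lb

namespace OpTree
variable {ν Ld Lb : Type}

def subtree : OpTree ν Ld Lb → List ℕ → Option (OpTree ν Ld Lb)
  | t, [] => some t
  | .ext _ t, 1 :: α => t.subtree α
  | .union t₁ _, 1 :: α => t₁.subtree α
  | .union _ t₂, 2 :: α => t₂.subtree α
  | _, _ => none

def Addr (t : OpTree ν Ld Lb) (α : List ℕ) : Prop := (t.subtree α).isSome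

def ops : OpTree ν Ld Lb → Set (ExpOp ν Ld Lb)
  | .phi => ∅
  | .ext Φ t => insert Φ t.ops
  | .union t₁ t₂ => t₁.ops ∪ t₂.ops

end OpTree

/-- A concrete evaluation of the tree `t` into the graph `G`: a family of subgraphs of `G`
(indexed by Gorn addresses, with no renaming of nodes) with `ev [] = G`, respecting the
operations labelling `t`. -/
def ConcreteEval {ν Ld Lb : Type} (t : OpTree ν Ld Lb) (G : LabGraph ν Ld Lb)
    (ev : List ℕ → LabGraph ν Ld Lb) : Prop :=
  ev [] = G ∧
  ∀ α, t.Addr α →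
    Subgraph (ev α) G ∧
    (t.subtree α = some .phi → (ev α).IsEmptyGraph) ∧
    (∀ Φ t', t.subtree α = some (.ext Φ t') → Apply Φ (ev (α ++ [1])) (ev α)) ∧
    (∀ t₁ t₂, t.subtree α = some (.union t₁ t₂) →
      UnionOf (ev (α ++ [1])) (ev (α ++ [2])) (ev α))
/-! Extensions only add nodes that are ports of the result, images of docks, or already present
in the argument. By (R2) every dock that is not a port is the target of an edge of `Φ`, whose source
is a port by (R1); neither end is cloned, so that edge survives in the result and makes every old
port reachable from a new one. An induction over the tree then carries reachability upwards. -/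

namespace OpTree
variable {ν Ld Lb : Type}

theorem subtree_append {t s : OpTree ν Ld Lb} {α : List ℕ} (h : t.subtree α = some s)
    (β : List ℕ) : t.subtree (α ++ β) = s.subtree β := by
  induction α generalizing t with
  | nil =>
    simp only [subtree, Option.some.injEq] at h
    subst h
    rfl
  | cons i α ih =>
    rcases t with _ | ⟨Φ, t⟩ | ⟨t₁, t₂⟩ <;> rcases i with _ | _ | _ | i <;>
      first | exact ih h | simp [subtree] at h

theorem ops_subset_of_subtree_eq_some {t s : OpTree ν Ld Lb} {α : List ℕ}
    (h : t.subtree α = some s) : s.ops ⊆ t.ops := by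
  induction α generalizing t with
  | nil =>
    simp only [subtree, Option.some.injEq] at h
    subst h
    rfl
  | cons i α ih =>
    rcases t with _ | ⟨Φ, t⟩ | ⟨t₁, t₂⟩ <;> rcases i with _ | _ | _ | i <;>
      first
      | exact (ih h).trans (Set.subset_insert _ _)
      | exact (ih h).trans Set.subset_union_left
      | exact (ih h).trans Set.subset_union_right
      | simp [subtree] at h

end OpTree

namespace LabGraph
variable {ν Ld Lb : Type}

theorem mem_reachSet_of_mem (G : LabGraph ν Ld Lb) {p : List ν} {u : ν} (hu : u ∈ p) :
    u ∈ G.reachSet p :=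
  ⟨u, hu, .refl⟩

theorem reachSet_subset_reachSet (G : LabGraph ν Ld Lb) {p q : List ν}
    (h : ∀ u ∈ p, u ∈ G.reachSet q) : G.reachSet p ⊆ G.reachSet q := by
  rintro v ⟨u, hu, huv⟩
  obtain ⟨w, hw, hwu⟩ := h u hu
  exact ⟨w, hw, hwu.trans huv⟩

theorem reachSet_mono_edges {G H : LabGraph ν Ld Lb} (hE : G.E ⊆ H.E) (p : List ν) :
    G.reachSet p ⊆ H.reachSet p := by
  rintro v ⟨u, hu, huv⟩
  exact ⟨u, hu, Relation.ReflTransGen.mono (fun _ _ ⟨ℓ, he⟩ => ⟨ℓ, hE he⟩) _ _ huv⟩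

theorem reachSet_append (G : LabGraph ν Ld Lb) (p q : List ν) :
    G.reachSet (p ++ q) = G.reachSet p ∪ G.reachSet q := by
  ext v
  constructor
  · rintro ⟨u, hu, huv⟩
    rcases List.mem_append.1 hu with hu | hu
    exacts [.inl ⟨u, hu, huv⟩, .inr ⟨u, hu, huv⟩]
  · rintro (⟨u, hu, huv⟩ | ⟨u, hu, huv⟩)
    exacts [⟨u, List.mem_append_left _ hu, huv⟩, ⟨u, List.mem_append_right _ hu, huv⟩]

end LabGraph

namespace ExpOp
variable {ν Ld Lb : Type}

theorem not_mem_C_of_mem_port (Φ : ExpOp ν Ld Lb) {v : ν} (hv : v ∈ Φ.port) : v ∉ Φ.C :=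
  fun hC => (Φ.C_sub hC).2 (.inl hv)

theorem not_mem_C_of_mem_dock (Φ : ExpOp ν Ld Lb) {v : ν} (hv : v ∈ Φ.dock) : v ∉ Φ.C :=
  fun hC => (Φ.C_sub hC).2 (.inr hv)

end ExpOp

namespace Apply
variable {ν Ld Lb : Type} {Φ : ExpOp ν Ld Lb} {G₁ H : LabGraph ν Ld Lb}

theorem nodes_subset (happ : Apply Φ G₁ H) :
    H.V ⊆ G₁.V ∪ {x | x ∈ G₁.port} ∪ {x | x ∈ H.port} := by
  obtain ⟨-, Cv, G'', μ, ⟨hCv, -, hV'', -, -, hport''⟩, -, -, hdock, hcont, hV, -, -, -, hport⟩ :=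
    happ
  rw [hV]
  rintro _ (hx | ⟨v', hv', rfl⟩)
  · exact .inl (.inl hx)
  rw [hV'', Set.mem_iUnion₂] at hv'
  obtain ⟨w, hw, hv'w⟩ := hv'
  by_cases hwp : w ∈ Φ.port
  · rw [hCv w hw (Φ.not_mem_C_of_mem_port hwp), Set.mem_singleton_iff] at hv'w
    subst hv'w
    exact .inr (by simpa [hport, hport''] using ⟨v', hwp, rfl⟩)
  by_cases hwd : w ∈ Φ.dock
  · rw [hCv w hw (Φ.not_mem_C_of_mem_dock hwd), Set.mem_singleton_iff] at hv'w
    subst hv'w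
    exact .inl (.inr (hdock ▸ List.mem_map_of_mem hwd))
  · exact .inl (.inl (hcont w ⟨hw, by simp [hwp, hwd]⟩ v' hv'w).1)

theorem port_subset_reachSet (hR1 : Φ.R1) (hR2 : Φ.R2) (happ : Apply Φ G₁ H) :
    ∀ x ∈ G₁.port, x ∈ H.reachSet H.port := by
  obtain ⟨-, Cv, G'', μ, ⟨hCv, -, -, hE'', -, hport''⟩, -, -, hdock, -, -, hE, -, -, hport⟩ :=
    happ
  have hCv_port : ∀ v ∈ Φ.port, Cv v = {v} :=
    fun v hv => hCv v (Φ.port_sub v hv) (Φ.not_mem_C_of_mem_port hv)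
  have hμ_port : ∀ v ∈ Φ.port, μ v ∈ H.port := fun v hv => by
    rw [hport, hport'']
    exact List.mem_map_of_mem hv
  intro x hx
  rw [← hdock, List.mem_map] at hx
  obtain ⟨d, hd, rfl⟩ := hx
  by_cases hdp : d ∈ Φ.port
  · exact H.mem_reachSet_of_mem (hμ_port d hdp)
  obtain ⟨⟨a, ℓ, d'⟩, he, hd'⟩ := hR2 d hd hdp
  obtain rfl : d = d' := hd'.symm
  have ha : a ∈ Φ.port := (hR1 _ he).1
  have hedge : (μ a, ℓ, μ d) ∈ H.E := by
    refine hE ▸ .inr ⟨(a, ℓ, d), ?_, rfl⟩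
    rw [hE'']
    refine ⟨a, ℓ, d, he, by simp [hCv_port a ha], rfl, ?_⟩
    simp [hCv d (Φ.dock_sub d hd) (Φ.not_mem_C_of_mem_dock hd)]
  exact ⟨μ a, hμ_port a ha, .single ⟨ℓ, hedge⟩⟩

theorem nodes_subset_reachSet {G : LabGraph ν Ld Lb} (hR1 : Φ.R1) (hR2 : Φ.R2)
    (happ : Apply Φ G₁ H) (hE : H.E ⊆ G.E) (hG₁ : G₁.V ⊆ G.reachSet G₁.port) :
    H.V ⊆ G.reachSet H.port := by
  have hold : ∀ x ∈ G₁.port, x ∈ G.reachSet H.port :=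
    fun x hx => LabGraph.reachSet_mono_edges hE _ (happ.port_subset_reachSet hR1 hR2 x hx)
  intro x hx
  rcases happ.nodes_subset hx with (hx | hx) | hx
  · exact G.reachSet_subset_reachSet hold (hG₁ hx)
  · exact hold x hx
  · exact G.mem_reachSet_of_mem hx

end Apply

theorem UnionOf.nodes_subset_reachSet {ν Ld Lb : Type} {G₁ G₂ H G : LabGraph ν Ld Lb}
    (hU : UnionOf G₁ G₂ H) (h₁ : G₁.V ⊆ G.reachSet G₁.port) (h₂ : G₂.V ⊆ G.reachSet G₂.port) :
    H.V ⊆ G.reachSet H.port := by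
  obtain ⟨-, hV, -, -, -, hport⟩ := hU
  rw [hV, hport, G.reachSet_append]
  exact Set.union_subset_union h₁ h₂

theorem ConcreteEval.nodes_subset_reachSet_of_subtree_eq_some {ν Ld Lb : Type}
    {t : OpTree ν Ld Lb} {G : LabGraph ν Ld Lb} {ev : List ℕ → LabGraph ν Ld Lb}
    (hops : ∀ Φ ∈ t.ops, Φ.R1 ∧ Φ.R2) (h : ConcreteEval t G ev) (s : OpTree ν Ld Lb) :
    ∀ α, t.subtree α = some s → (ev α).V ⊆ G.reachSet (ev α).port := by
  induction s with
  | phi =>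
    intro α hα
    rw [((h.2 α (by simp [OpTree.Addr, hα])).2.1 hα).1]
    exact Set.empty_subset _
  | ext Φ t' ih =>
    intro α hα
    have hchild : t.subtree (α ++ [1]) = some t' := by
      simp [OpTree.subtree_append hα, OpTree.subtree]
    have hΦ := hops Φ (OpTree.ops_subset_of_subtree_eq_some hα (Set.mem_insert _ _))
    obtain ⟨hsub, -, happ, -⟩ := h.2 α (by simp [OpTree.Addr, hα])
    exact (happ Φ t' hα).nodes_subset_reachSet hΦ.1 hΦ.2 hsub.2.1 (ih _ hchild)
  | union t₁ t₂ ih₁ ih₂ =>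
    intro α hα
    have hchild₁ : t.subtree (α ++ [1]) = some t₁ := by
      simp [OpTree.subtree_append hα, OpTree.subtree]
    have hchild₂ : t.subtree (α ++ [2]) = some t₂ := by
      simp [OpTree.subtree_append hα, OpTree.subtree]
    obtain ⟨-, -, -, hunion⟩ := h.2 α (by simp [OpTree.Addr, hα])
    exact (hunion t₁ t₂ hα).nodes_subset_reachSet (ih₁ _ hchild₁) (ih₂ _ hchild₂)

/-- Claim 2 of the Reachability Lemma: in a concrete evaluation of `t` into
`G`, the node set `V_α` is contained in the set of nodes reachable in `G` from `port_α`. -/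
theorem nodes_reachable_from_ports {ν Ld Lb : Type} (t : OpTree ν Ld Lb)
    (G : LabGraph ν Ld Lb) (ev : List ℕ → LabGraph ν Ld Lb)
    (hops : ∀ Φ ∈ t.ops, Φ.R1 ∧ Φ.R2)
    (h : ConcreteEval t G ev) :
    ∀ α, t.Addr α → (ev α).V ⊆ G.reachSet (ev α).port := by
  intro α hα
  obtain ⟨s, hs⟩ := Option.isSome_iff_exists.1 hα
  exact h.nodes_subset_reachSet_of_subtree_eq_some hops s α hs
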